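/- Let D be a parity-0 derivation of SV = SV[Γ,s] of degree 0 satisfying D(L_{0,0}) = 0. Then there exists a group homomorphism d: (Ω,+) → (ℂ,+) such that D(L_{α,0}) = d(α)·L_{α,0} for all α ∈ Γ and D(G_{μ,0}) = d(μ)·G_{μ,0} for all μ ∈ s+Γ. -/
import Mathlib


noncomputable section

namespace SVSuper

variable (Γ : AddSubgroup ℂ) (s : ℂ)

/-- Basis index type of `SV[Γ,s]`: `Sum.inl (α, i)` stands for `L_{α,i}` (`α ∈ Γ`),
`Sum.inr (μ, j)` stands for `G_{μ,j}` (`μ ∈ s + Γ`). -/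
abbrev Idx : Type := (Γ × ℕ) ⊕ ({μ : ℂ // μ - s ∈ Γ} × ℕ)

/-- The underlying vector space of `SV[Γ,s]`: the free `ℂ`-module on `Idx`. -/
abbrev SV : Type := Idx Γ s →₀ ℂ

/-- The basis vector `L_{α,i}`. -/
def lgen (α : ℂ) (hα : α ∈ Γ) (i : ℕ) : SV Γ s :=
  Finsupp.single (Sum.inl (⟨α, hα⟩, i)) 1

/-- The basis vector `G_{μ,j}`. -/
def ggen (μ : ℂ) (hμ : μ - s ∈ Γ) (j : ℕ) : SV Γ s :=
  Finsupp.single (Sum.inr (⟨μ, hμ⟩, j)) 1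

theorem memLG {α μ : ℂ} (hα : α ∈ Γ) (hμ : μ - s ∈ Γ) : α + μ - s ∈ Γ := by
  have h : α + μ - s = α + (μ - s) := by ring
  rw [h]; exact add_mem hα hμ

theorem memGG (hs : 2 * s ∈ Γ) {μ ν : ℂ} (hμ : μ - s ∈ Γ) (hν : ν - s ∈ Γ) :
    μ + ν ∈ Γ := by
  have h : μ + ν = (μ - s) + (ν - s) + 2 * s := by ring
  rw [h]; exact add_mem (add_mem hμ hν) hs

/-- The bracket on basis vectors (any symbol with second index `-1` is interpreted as `0`;
here this is automatic since the corresponding coefficient vanishes when `i = j = 0`). -/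
def bk (hs : 2 * s ∈ Γ) : Idx Γ s → Idx Γ s → SV Γ s
  | Sum.inl (⟨α, hα⟩, i), Sum.inl (⟨β, hβ⟩, j) =>
      (β - α) • lgen Γ s (α + β) (add_mem hα hβ) (i + j)
        + ((j : ℂ) - (i : ℂ)) • lgen Γ s (α + β) (add_mem hα hβ) (i + j - 1)
  | Sum.inl (⟨α, hα⟩, i), Sum.inr (⟨μ, hμ⟩, j) =>
      (μ - α / 2) • ggen Γ s (α + μ) (memLG Γ s hα hμ) (i + j)
        + ((j : ℂ) - (i : ℂ) / 2) • ggen Γ s (α + μ) (memLG Γ s hα hμ) (i + j - 1)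
  | Sum.inr (⟨μ, hμ⟩, i), Sum.inl (⟨α, hα⟩, j) =>
      -((μ - α / 2) • ggen Γ s (α + μ) (memLG Γ s hα hμ) (j + i)
        + ((i : ℂ) - (j : ℂ) / 2) • ggen Γ s (α + μ) (memLG Γ s hα hμ) (j + i - 1))
  | Sum.inr (⟨μ, hμ⟩, i), Sum.inr (⟨ν, hν⟩, j) =>
      (2 : ℂ) • lgen Γ s (μ + ν) (memGG Γ s hs hμ hν) (i + j)

/-- The bilinear bracket of `SV[Γ,s]`. -/
def bkt (hs : 2 * s ∈ Γ) (x y : SV Γ s) : SV Γ s :=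
  x.sum fun a ca => y.sum fun b cb => (ca * cb) • bk Γ s hs a b

/-- `x` lies in the even part `SV_0̄` (the span of the `L_{α,i}`). -/
def IsEvenElt (x : SV Γ s) : Prop := ∀ b, x (Sum.inr b) = 0

/-- `x` lies in the odd part `SV_1̄` (the span of the `G_{μ,j}`). -/
def IsOddElt (x : SV Γ s) : Prop := ∀ a, x (Sum.inl a) = 0

/-- `x` is `ℤ₂`-homogeneous. -/
def IsHomog (x : SV Γ s) : Prop := IsEvenElt Γ s x ∨ IsOddElt Γ s x

/-- `x` lies in the degree-`γ` component `SV_γ = span{L_{γ,i}, G_{γ,i}}` of the `Ω`-grading. -/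
def InDeg (γ : ℂ) (x : SV Γ s) : Prop :=
  (∀ p : Γ × ℕ, (p.1 : ℂ) ≠ γ → x (Sum.inl p) = 0) ∧
  (∀ q : {μ : ℂ // μ - s ∈ Γ} × ℕ, (q.1 : ℂ) ≠ γ → x (Sum.inr q) = 0)

/-- The group `Ω`, generated by `Γ ∪ {s}`. -/
def Omega : AddSubgroup ℂ := Γ ⊔ AddSubgroup.closure {s}

theorem gamma_mem_Omega {α : ℂ} (hα : α ∈ Γ) : α ∈ Omega Γ s :=
  AddSubgroup.mem_sup_left hα

theorem s_mem_Omega : s ∈ Omega Γ s :=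
  AddSubgroup.mem_sup_right (AddSubgroup.subset_closure (Set.mem_singleton s))

theorem smu_mem_Omega {μ : ℂ} (hμ : μ - s ∈ Γ) : μ ∈ Omega Γ s := by
  have h := add_mem (gamma_mem_Omega Γ s hμ) (s_mem_Omega Γ s)
  rwa [sub_add_cancel] at h

/-- The `Ω`-degree of a basis index. -/
def idxDeg : Idx Γ s → ℂ
  | Sum.inl p => (p.1 : ℂ)
  | Sum.inr q => (q.1 : ℂ)

theorem idxDeg_mem (a : Idx Γ s) : idxDeg Γ s a ∈ Omega Γ s := by
  cases a with
  | inl p => exact gamma_mem_Omega Γ s p.1.2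
  | inr q => exact smu_mem_Omega Γ s q.1.2

/-- The derivation `D_φ` attached to a group homomorphism `φ : (Ω,+) → (ℂ,+)`:
`D_φ (L_{α,i}) = φ(α) • L_{α,i}` and `D_φ (G_{μ,j}) = φ(μ) • G_{μ,j}`. -/
def Dphi (φ : ↥(Omega Γ s) →+ ℂ) : SV Γ s →ₗ[ℂ] SV Γ s :=
  Finsupp.lsum ℂ fun a => φ ⟨idxDeg Γ s a, idxDeg_mem Γ s a⟩ • Finsupp.lsingle a

/-- `D` is a parity-`0` (even) derivation of `SV[Γ,s]`. -/
def IsEvenDer (hs : 2 * s ∈ Γ) (D : SV Γ s →ₗ[ℂ] SV Γ s) : Prop :=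
  (∀ x, IsEvenElt Γ s x → IsEvenElt Γ s (D x)) ∧
  (∀ x, IsOddElt Γ s x → IsOddElt Γ s (D x)) ∧
  (∀ x y, IsHomog Γ s x →
    D (bkt Γ s hs x y) = bkt Γ s hs (D x) y + bkt Γ s hs x (D y))

/-- `D` is a parity-`1` (odd) derivation of `SV[Γ,s]`. -/
def IsOddDer (hs : 2 * s ∈ Γ) (D : SV Γ s →ₗ[ℂ] SV Γ s) : Prop :=
  (∀ x, IsEvenElt Γ s x → IsOddElt Γ s (D x)) ∧
  (∀ x, IsOddElt Γ s x → IsEvenElt Γ s (D x)) ∧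
  (∀ x y, IsEvenElt Γ s x →
    D (bkt Γ s hs x y) = bkt Γ s hs (D x) y + bkt Γ s hs x (D y)) ∧
  (∀ x y, IsOddElt Γ s x →
    D (bkt Γ s hs x y) = bkt Γ s hs (D x) y - bkt Γ s hs x (D y))

/-- `D` is a derivation of `SV[Γ,s]`: a sum of an even and an odd derivation. -/
def IsDer (hs : 2 * s ∈ Γ) (D : SV Γ s →ₗ[ℂ] SV Γ s) : Prop :=
  ∃ D0 D1, IsEvenDer Γ s hs D0 ∧ IsOddDer Γ s hs D1 ∧ D = D0 + D1

/-- `D` has degree `γ`: it maps `SV_δ` into `SV_{δ+γ}` for every `δ`. -/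
def HasDeg (γ : ℂ) (D : SV Γ s →ₗ[ℂ] SV Γ s) : Prop :=
  ∀ (δ : ℂ) (x : SV Γ s), InDeg Γ s δ x → InDeg Γ s (δ + γ) (D x)

/-- `ψ` is a 2-cocycle on `SV[Γ,s]` (super skew-symmetry and super Jacobi identity,
with the sign `(-1)^{|x||y|}` spelled out according to the parities). -/
def IsCocycle (hs : 2 * s ∈ Γ) (ψ : SV Γ s →ₗ[ℂ] SV Γ s →ₗ[ℂ] ℂ) : Prop :=
  (∀ x y, IsHomog Γ s x → IsHomog Γ s y → (IsEvenElt Γ s x ∨ IsEvenElt Γ s y) →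
    ψ x y = - ψ y x) ∧
  (∀ x y, IsOddElt Γ s x → IsOddElt Γ s y → ψ x y = ψ y x) ∧
  (∀ x y z, IsHomog Γ s x → IsHomog Γ s y → (IsEvenElt Γ s x ∨ IsEvenElt Γ s y) →
    ψ x (bkt Γ s hs y z) = ψ (bkt Γ s hs x y) z + ψ y (bkt Γ s hs x z)) ∧
  (∀ x y z, IsOddElt Γ s x → IsOddElt Γ s y →
    ψ x (bkt Γ s hs y z) = ψ (bkt Γ s hs x y) z - ψ y (bkt Γ s hs x z))

/-- `f : SV → ℂ` satisfies the recursive formulas associated to the 2-cocycle `ψ`. -/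
def IsAssocMap (hs : 2 * s ∈ Γ) (ψ : SV Γ s →ₗ[ℂ] SV Γ s →ₗ[ℂ] ℂ)
    (f : SV Γ s →ₗ[ℂ] ℂ) : Prop :=
  (∀ i : ℕ, f (lgen Γ s 0 (zero_mem Γ) i)
      = ψ (lgen Γ s 0 (zero_mem Γ) 0) (lgen Γ s 0 (zero_mem Γ) (i + 1)) / (i + 1)) ∧
  (∀ (α : ℂ) (hα : α ∈ Γ) (i : ℕ), α ≠ 0 →
    f (lgen Γ s α hα i)
      = (ψ (lgen Γ s 0 (zero_mem Γ) 0) (lgen Γ s α hα i) - (i : ℂ) * f (lgen Γ s α hα (i - 1))) / α) ∧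
  (∀ (h0 : (0 : ℂ) - s ∈ Γ) (i : ℕ),
    f (ggen Γ s 0 h0 i) = (2 / (2 * (i : ℂ) - 1)) * ψ (lgen Γ s 0 (zero_mem Γ) 1) (ggen Γ s 0 h0 i)) ∧
  (∀ (μ : ℂ) (hμ : μ - s ∈ Γ) (i : ℕ), μ ≠ 0 →
    f (ggen Γ s μ hμ i)
      = (ψ (lgen Γ s 0 (zero_mem Γ) 0) (ggen Γ s μ hμ i) - (i : ℂ) * f (ggen Γ s μ hμ (i - 1))) / μ)

section Aux
variable (hs : 2 * s ∈ Γ)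

/-- The bracket as a bilinear map. -/
def bkL : SV Γ s →ₗ[ℂ] SV Γ s →ₗ[ℂ] SV Γ s :=
  Finsupp.lsum ℂ fun a => LinearMap.toSpanSingleton ℂ _
    (Finsupp.lsum ℂ fun b => LinearMap.toSpanSingleton ℂ _ (bk Γ s hs a b))

lemma bkt_eq (x y : SV Γ s) : bkt Γ s hs x y = bkL Γ s hs x y := by
  rw [bkt, bkL, Finsupp.lsum_apply, LinearMap.finsupp_sum_apply]
  apply Finsupp.sum_congr
  intro a _
  rw [LinearMap.toSpanSingleton_apply, LinearMap.smul_apply, Finsupp.lsum_apply,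
    Finsupp.smul_sum]
  apply Finsupp.sum_congr
  intro b _
  rw [LinearMap.toSpanSingleton_apply, smul_smul]

lemma bkt_single_single (a b : Idx Γ s) :
    bkt Γ s hs (Finsupp.single a 1) (Finsupp.single b 1) = bk Γ s hs a b := by
  rw [bkt, Finsupp.sum_single_index, Finsupp.sum_single_index] <;> simp

lemma bkt_single_left (a : Idx Γ s) (y : SV Γ s) :
    bkt Γ s hs (Finsupp.single a 1) y = y.sum fun b cb => cb • bk Γ s hs a b := by
  rw [bkt, Finsupp.sum_single_index]
  · simp
  · simp

end Aux
section Aux2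
variable (hs : 2 * s ∈ Γ)

lemma bkt_ll (α β : ℂ) (hα : α ∈ Γ) (hβ : β ∈ Γ) (i j : ℕ) :
    bkt Γ s hs (lgen Γ s α hα i) (lgen Γ s β hβ j)
      = (β - α) • lgen Γ s (α + β) (add_mem hα hβ) (i + j)
        + ((j : ℂ) - (i : ℂ)) • lgen Γ s (α + β) (add_mem hα hβ) (i + j - 1) := by
  rw [lgen, lgen, bkt_single_single]; rfl

lemma bkt_lg (α μ : ℂ) (hα : α ∈ Γ) (hμ : μ - s ∈ Γ) (i j : ℕ) :
    bkt Γ s hs (lgen Γ s α hα i) (ggen Γ s μ hμ j)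
      = (μ - α / 2) • ggen Γ s (α + μ) (memLG Γ s hα hμ) (i + j)
        + ((j : ℂ) - (i : ℂ) / 2) • ggen Γ s (α + μ) (memLG Γ s hα hμ) (i + j - 1) := by
  rw [lgen, ggen, bkt_single_single]; rfl

lemma bkt_gg (μ ν : ℂ) (hμ : μ - s ∈ Γ) (hν : ν - s ∈ Γ) (i j : ℕ) :
    bkt Γ s hs (ggen Γ s μ hμ i) (ggen Γ s ν hν j)
      = (2 : ℂ) • lgen Γ s (μ + ν) (memGG Γ s hs hμ hν) (i + j) := by
  rw [ggen, ggen, bkt_single_single]; rfl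

lemma lgen_congr {α β : ℂ} (h : α = β) (hα : α ∈ Γ) (i : ℕ) :
    lgen Γ s α hα i = lgen Γ s β (h ▸ hα) i := by subst h; rfl

lemma ggen_congr {μ ν : ℂ} (h : μ = ν) (hμ : μ - s ∈ Γ) (i : ℕ) :
    ggen Γ s μ hμ i = ggen Γ s ν (h ▸ hμ) i := by subst h; rfl

end Aux2
section Aux3
variable (hs : 2 * s ∈ Γ)

def suc : Idx Γ s → Idx Γ s
  | Sum.inl (p, i) => Sum.inl (p, i + 1)
  | Sum.inr (q, j) => Sum.inr (q, j + 1)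

def idxN : Idx Γ s → ℕ
  | Sum.inl (_, i) => i
  | Sum.inr (_, j) => j

lemma suc_ne (c : Idx Γ s) : c ≠ suc Γ s c := by
  rcases c with ⟨p, i⟩ | ⟨q, j⟩ <;> simp [suc]

lemma bk_zero_apply (b c : Idx Γ s) :
    (bk Γ s hs (Sum.inl (⟨0, zero_mem Γ⟩, 0)) b) c
      = (if b = c then idxDeg Γ s c else 0)
        + (if b = suc Γ s c then ((idxN Γ s c : ℂ) + 1) else 0) := by
  classical
  rcases b with ⟨⟨β, hβ⟩, j⟩ | ⟨⟨ν, hν⟩, j⟩ <;> rcases c with ⟨⟨α, hα⟩, i⟩ | ⟨⟨μ, hμ⟩, i⟩ <;>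
    simp only [bk, suc, idxN, idxDeg, lgen, ggen, Finsupp.add_apply, Finsupp.smul_apply,
      Finsupp.single_apply, Finsupp.neg_apply, smul_eq_mul, zero_add, Nat.sub_zero,
      Nat.cast_zero, sub_zero, zero_div, zero_sub] <;>
    split_ifs <;>
    simp_all [Prod.ext_iff, Subtype.ext_iff] <;>
    subst_vars <;>
    try omega
end Aux3
section Aux4
variable (hs : 2 * s ∈ Γ)

lemma sum_two (z : SV Γ s) (f : Idx Γ s → ℂ → ℂ) (b₁ b₂ : Idx Γ s) (hne : b₁ ≠ b₂)
    (h0 : ∀ b, f b 0 = 0) (hv : ∀ b, b ≠ b₁ → b ≠ b₂ → f b (z b) = 0) :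
    z.sum f = f b₁ (z b₁) + f b₂ (z b₂) := by
  classical
  rw [Finsupp.sum]
  have hsub : z.support ∩ {b₁, b₂} ⊆ z.support := Finset.inter_subset_left
  rw [← Finset.sum_subset hsub ?h]
  case h =>
    intro b hb hb'
    have h1 : b ≠ b₁ ∨ b ≠ b₂ → True := fun _ => trivial
    by_cases e1 : b = b₁
    · by_cases e2 : b = b₂ <;> simp_all [Finset.mem_inter]
    · by_cases e2 : b = b₂
      · simp_all [Finset.mem_inter]
      · exact hv b e1 e2
  have hsub2 : z.support ∩ {b₁, b₂} ⊆ ({b₁, b₂} : Finset _) := Finset.inter_subset_right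
  rw [Finset.sum_subset hsub2 ?h2]
  case h2 =>
    intro b hb hb'
    have : b ∉ z.support := fun hbs => hb' (Finset.mem_inter.mpr ⟨hbs, hb⟩)
    rw [Finsupp.notMem_support_iff.mp this, h0]
  rw [Finset.sum_pair hne]

lemma bkt_L00_apply (z : SV Γ s) (c : Idx Γ s) :
    (bkt Γ s hs (lgen Γ s 0 (zero_mem Γ) 0) z) c
      = idxDeg Γ s c * z c + ((idxN Γ s c : ℂ) + 1) * z (suc Γ s c) := by
  classical
  rw [lgen, bkt_single_left, Finsupp.sum_apply]
  have : ∀ b cb, (cb • bk Γ s hs (Sum.inl (⟨0, zero_mem Γ⟩, 0)) b) c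
      = cb * ((if b = c then idxDeg Γ s c else 0)
        + (if b = suc Γ s c then ((idxN Γ s c : ℂ) + 1) else 0)) := by
    intro b cb
    rw [Finsupp.smul_apply, bk_zero_apply, smul_eq_mul]
  rw [Finsupp.sum_congr (g2 := fun b cb => cb * ((if b = c then idxDeg Γ s c else 0)
    + (if b = suc Γ s c then ((idxN Γ s c : ℂ) + 1) else 0))) (fun b _ => this b (z b))]
  rw [sum_two Γ s (hne := suc_ne Γ s c) (h0 := by intro b; ring)
    (hv := by intro b h1 h2; rw [if_neg h1, if_neg h2]; ring)]
  rw [if_pos rfl, if_pos rfl, if_neg (suc_ne Γ s c), if_neg (Ne.symm (suc_ne Γ s c))]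
  ring
end Aux4
section Aux5
variable (hs : 2 * s ∈ Γ)

lemma diag_L {α : ℂ} (hα : α ∈ Γ) {z : SV Γ s}
    (hz : bkt Γ s hs (lgen Γ s 0 (zero_mem Γ) 0) z = α • z)
    (heven : ∀ q, z (Sum.inr q) = 0)
    (hdeg : ∀ p : Γ × ℕ, (p.1 : ℂ) ≠ α → z (Sum.inl p) = 0) :
    z = z (Sum.inl (⟨α, hα⟩, 0)) • lgen Γ s α hα 0 := by
  classical
  have hi : ∀ i : ℕ, z (Sum.inl (⟨α, hα⟩, i + 1)) = 0 := by
    intro i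
    have h := congrArg (fun w : SV Γ s => w (Sum.inl (⟨α, hα⟩, i))) hz
    simp only [bkt_L00_apply, Finsupp.smul_apply, smul_eq_mul] at h
    have h2 : ((i : ℂ) + 1) * z (suc Γ s (Sum.inl (⟨α, hα⟩, i))) = 0 := by
      have h1 : idxDeg Γ s (Sum.inl (⟨α, hα⟩, i)) = α := rfl
      have hn : (idxN Γ s (Sum.inl (⟨α, hα⟩, i)) : ℂ) = (i : ℂ) := rfl
      rw [h1, hn] at h
      linear_combination h
    have h3 := mul_eq_zero.mp h2
    rcases h3 with h3 | h3
    · exact absurd h3 (Nat.cast_add_one_ne_zero i)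
    · exact h3
  ext a
  rcases a with ⟨⟨β, hβ⟩, i⟩ | q
  · by_cases hb : β = α
    · subst hb
      have hb' : (⟨β, hβ⟩ : Γ) = ⟨β, hα⟩ := rfl
      cases i with
      | zero => simp [lgen, Finsupp.single_apply]
      | succ n =>
        rw [hi n]
        simp [lgen, Finsupp.single_apply]
    · rw [hdeg (⟨β, hβ⟩, i) hb]
      simp [lgen, Finsupp.single_apply, Ne.symm hb]
  · rw [heven q]
    simp [lgen, Finsupp.single_apply]
end Aux5
section Aux6
variable (hs : 2 * s ∈ Γ)

lemma diag_G {μ : ℂ} (hμ : μ - s ∈ Γ) {z : SV Γ s}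
    (hz : bkt Γ s hs (lgen Γ s 0 (zero_mem Γ) 0) z = μ • z)
    (hodd : ∀ p, z (Sum.inl p) = 0)
    (hdeg : ∀ q : {x : ℂ // x - s ∈ Γ} × ℕ, (q.1 : ℂ) ≠ μ → z (Sum.inr q) = 0) :
    z = z (Sum.inr (⟨μ, hμ⟩, 0)) • ggen Γ s μ hμ 0 := by
  classical
  have hi : ∀ i : ℕ, z (Sum.inr (⟨μ, hμ⟩, i + 1)) = 0 := by
    intro i
    have h := congrArg (fun w : SV Γ s => w (Sum.inr (⟨μ, hμ⟩, i))) hz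
    simp only [bkt_L00_apply, Finsupp.smul_apply, smul_eq_mul] at h
    have h2 : ((i : ℂ) + 1) * z (suc Γ s (Sum.inr (⟨μ, hμ⟩, i))) = 0 := by
      have h1 : idxDeg Γ s (Sum.inr (⟨μ, hμ⟩, i)) = μ := rfl
      have hn : (idxN Γ s (Sum.inr (⟨μ, hμ⟩, i)) : ℂ) = (i : ℂ) := rfl
      rw [h1, hn] at h
      linear_combination h
    rcases mul_eq_zero.mp h2 with h3 | h3
    · exact absurd h3 (Nat.cast_add_one_ne_zero i)
    · exact h3
  ext a
  rcases a with p | ⟨⟨ν, hν⟩, i⟩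
  · rw [hodd p]
    simp [ggen, Finsupp.single_apply]
  · by_cases hb : ν = μ
    · subst hb
      cases i with
      | zero => simp [ggen, Finsupp.single_apply]
      | succ n =>
        rw [hi n]
        simp [ggen, Finsupp.single_apply]
    · rw [hdeg (⟨ν, hν⟩, i) hb]
      simp [ggen, Finsupp.single_apply, Ne.symm hb]

lemma diag_L1 {α : ℂ} (hα : α ∈ Γ) {t : ℂ} {z : SV Γ s}
    (hz : bkt Γ s hs (lgen Γ s 0 (zero_mem Γ) 0) z = α • z + t • lgen Γ s α hα 0)
    (heven : ∀ q, z (Sum.inr q) = 0)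
    (hdeg : ∀ p : Γ × ℕ, (p.1 : ℂ) ≠ α → z (Sum.inl p) = 0) :
    z = z (Sum.inl (⟨α, hα⟩, 0)) • lgen Γ s α hα 0 + t • lgen Γ s α hα 1 := by
  classical
  have key : ∀ i : ℕ, ((i : ℂ) + 1) * z (Sum.inl (⟨α, hα⟩, i + 1))
      = t * (if i = 0 then 1 else 0) := by
    intro i
    have h := congrArg (fun w : SV Γ s => w (Sum.inl (⟨α, hα⟩, i))) hz
    simp only [bkt_L00_apply] at h
    simp only [Finsupp.add_apply, Finsupp.smul_apply, smul_eq_mul,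
      lgen, Finsupp.single_apply] at h
    have h1 : idxDeg Γ s (Sum.inl (⟨α, hα⟩, i)) = α := rfl
    have hn : (idxN Γ s (Sum.inl (⟨α, hα⟩, i)) : ℂ) = (i : ℂ) := rfl
    rw [h1, hn] at h
    have hif : (if (Sum.inl (⟨α, hα⟩, 0) : Idx Γ s) = Sum.inl (⟨α, hα⟩, i) then (1:ℂ) else 0)
        = (if i = 0 then 1 else 0) := by
      by_cases hi0 : i = 0
      · subst hi0; simp
      · rw [if_neg, if_neg hi0]
        simp [Prod.ext_iff]
        omega
    rw [hif] at h
    have hsuc : suc Γ s (Sum.inl (⟨α, hα⟩, i)) = Sum.inl (⟨α, hα⟩, i + 1) := rfl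
    rw [hsuc] at h
    linear_combination h
  have h1 : z (Sum.inl (⟨α, hα⟩, 1)) = t := by
    have := key 0
    simpa using this
  have hi : ∀ n : ℕ, z (Sum.inl (⟨α, hα⟩, n + 2)) = 0 := by
    intro n
    have h := key (n + 1)
    rw [if_neg (Nat.succ_ne_zero n), mul_zero] at h
    rcases mul_eq_zero.mp h with h3 | h3
    · norm_cast at h3
    · exact h3
  ext a
  rcases a with ⟨⟨β, hβ⟩, i⟩ | q
  · by_cases hb : β = α
    · subst hb
      match i with
      | 0 => simp [lgen, Finsupp.single_apply]
      | 1 => rw [h1]; simp [lgen, Finsupp.single_apply]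
      | (n+2) =>
        rw [hi n]
        simp [lgen, Finsupp.single_apply]
    · rw [hdeg (⟨β, hβ⟩, i) hb]
      simp [lgen, Finsupp.single_apply, Ne.symm hb]
  · rw [heven q]
    simp [lgen, Finsupp.single_apply]
end Aux6
section Aux7
variable (hs : 2 * s ∈ Γ)

lemma Lzero_def : lgen Γ s 0 (zero_mem Γ) 0 = Finsupp.single (Sum.inl (⟨0, zero_mem Γ⟩, 0)) 1 := rfl

lemma bkt_L00_L0 (α : ℂ) (hα : α ∈ Γ) :
    bkt Γ s hs (lgen Γ s 0 (zero_mem Γ) 0) (lgen Γ s α hα 0) = α • lgen Γ s α hα 0 := by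
  rw [bkt_ll]
  have e : lgen Γ s (0 + α) (add_mem (zero_mem Γ) hα) 0 = lgen Γ s α hα 0 := by
    simp [lgen]
  simp only [Nat.add_zero, Nat.zero_add]
  norm_num [e]

lemma bkt_L00_L1 (α : ℂ) (hα : α ∈ Γ) :
    bkt Γ s hs (lgen Γ s 0 (zero_mem Γ) 0) (lgen Γ s α hα 1)
      = α • lgen Γ s α hα 1 + lgen Γ s α hα 0 := by
  rw [bkt_ll]
  have e : ∀ i, lgen Γ s (0 + α) (add_mem (zero_mem Γ) hα) i = lgen Γ s α hα i := by
    intro i; simp [lgen]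
  norm_num [e]

lemma bkt_L00_G0 (μ : ℂ) (hμ : μ - s ∈ Γ) :
    bkt Γ s hs (lgen Γ s 0 (zero_mem Γ) 0) (ggen Γ s μ hμ 0) = μ • ggen Γ s μ hμ 0 := by
  rw [bkt_lg]
  have e : ggen Γ s (0 + μ) (memLG Γ s (zero_mem Γ) hμ) 0 = ggen Γ s μ hμ 0 := by
    simp [ggen]
  norm_num [e]

lemma bkt_L0_L0 (α β : ℂ) (hα : α ∈ Γ) (hβ : β ∈ Γ) :
    bkt Γ s hs (lgen Γ s α hα 0) (lgen Γ s β hβ 0)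
      = (β - α) • lgen Γ s (α + β) (add_mem hα hβ) 0 := by
  rw [bkt_ll]; norm_num

lemma bkt_L0_L1 (α β : ℂ) (hα : α ∈ Γ) (hβ : β ∈ Γ) :
    bkt Γ s hs (lgen Γ s α hα 0) (lgen Γ s β hβ 1)
      = (β - α) • lgen Γ s (α + β) (add_mem hα hβ) 1 + lgen Γ s (α + β) (add_mem hα hβ) 0 := by
  rw [bkt_ll]; norm_num

lemma bkt_L0_G0 (α μ : ℂ) (hα : α ∈ Γ) (hμ : μ - s ∈ Γ) :
    bkt Γ s hs (lgen Γ s α hα 0) (ggen Γ s μ hμ 0)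
      = (μ - α / 2) • ggen Γ s (α + μ) (memLG Γ s hα hμ) 0 := by
  rw [bkt_lg]; norm_num

lemma bkt_L1_G0 (α μ : ℂ) (hα : α ∈ Γ) (hμ : μ - s ∈ Γ) :
    bkt Γ s hs (lgen Γ s α hα 1) (ggen Γ s μ hμ 0)
      = (μ - α / 2) • ggen Γ s (α + μ) (memLG Γ s hα hμ) 1
        - (1 / 2 : ℂ) • ggen Γ s (α + μ) (memLG Γ s hα hμ) 0 := by
  rw [bkt_lg]
  norm_num
  abel

lemma bkt_G0_G0 (μ ν : ℂ) (hμ : μ - s ∈ Γ) (hν : ν - s ∈ Γ) :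
    bkt Γ s hs (ggen Γ s μ hμ 0) (ggen Γ s ν hν 0)
      = (2 : ℂ) • lgen Γ s (μ + ν) (memGG Γ s hs hμ hν) 0 := by
  rw [bkt_gg]

lemma bkt_zero_left (y : SV Γ s) : bkt Γ s hs 0 y = 0 := by
  rw [bkt_eq]; simp

lemma bkt_smul_left (c : ℂ) (x y : SV Γ s) : bkt Γ s hs (c • x) y = c • bkt Γ s hs x y := by
  rw [bkt_eq, bkt_eq, map_smul, LinearMap.smul_apply]

lemma bkt_smul_right (c : ℂ) (x y : SV Γ s) : bkt Γ s hs x (c • y) = c • bkt Γ s hs x y := by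
  rw [bkt_eq, bkt_eq, map_smul]

lemma bkt_add_left (x x' y : SV Γ s) :
    bkt Γ s hs (x + x') y = bkt Γ s hs x y + bkt Γ s hs x' y := by
  rw [bkt_eq, bkt_eq, bkt_eq, map_add, LinearMap.add_apply]

lemma bkt_add_right (x y y' : SV Γ s) :
    bkt Γ s hs x (y + y') = bkt Γ s hs x y + bkt Γ s hs x y' := by
  rw [bkt_eq, bkt_eq, bkt_eq, map_add]

lemma smul_lgen_inj {α : ℂ} {hα : α ∈ Γ} {i : ℕ} {c c' : ℂ}
    (h : c • lgen Γ s α hα i = c' • lgen Γ s α hα i) : c = c' := by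
  have := congrArg (fun w : SV Γ s => w (Sum.inl (⟨α, hα⟩, i))) h
  simpa [lgen, Finsupp.single_apply] using this

lemma smul_ggen_inj {μ : ℂ} {hμ : μ - s ∈ Γ} {i : ℕ} {c c' : ℂ}
    (h : c • ggen Γ s μ hμ i = c' • ggen Γ s μ hμ i) : c = c' := by
  have := congrArg (fun w : SV Γ s => w (Sum.inr (⟨μ, hμ⟩, i))) h
  simpa [ggen, Finsupp.single_apply] using this

lemma lgen_even (α : ℂ) (hα : α ∈ Γ) (i : ℕ) : IsEvenElt Γ s (lgen Γ s α hα i) := by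
  intro b; simp [lgen, Finsupp.single_apply]

lemma ggen_odd (μ : ℂ) (hμ : μ - s ∈ Γ) (i : ℕ) : IsOddElt Γ s (ggen Γ s μ hμ i) := by
  intro a; simp [ggen, Finsupp.single_apply]

lemma lgen_indeg (α : ℂ) (hα : α ∈ Γ) (i : ℕ) : InDeg Γ s α (lgen Γ s α hα i) := by
  constructor
  · intro p hp
    simp only [lgen, Finsupp.single_apply]
    rw [if_neg]
    intro h
    injection h with h'
    rw [← h'] at hp
    exact hp rfl
  · intro q _
    simp [lgen, Finsupp.single_apply]

lemma ggen_indeg (μ : ℂ) (hμ : μ - s ∈ Γ) (i : ℕ) : InDeg Γ s μ (ggen Γ s μ hμ i) := by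
  constructor
  · intro p _
    simp [ggen, Finsupp.single_apply]
  · intro q hq
    simp only [ggen, Finsupp.single_apply]
    rw [if_neg]
    intro h
    injection h with h'
    rw [← h'] at hq
    exact hq rfl

end Aux7
section Aux8

lemma omega_dichotomy (hs : 2 * s ∈ Γ) {ω : ℂ} (hω : ω ∈ Omega Γ s) :
    ω ∈ Γ ∨ ω - s ∈ Γ := by
  rw [Omega, AddSubgroup.mem_sup] at hω
  obtain ⟨y, hy, z, hz, rfl⟩ := hω
  rw [AddSubgroup.mem_closure_singleton] at hz
  obtain ⟨n, rfl⟩ := hz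
  rcases Int.even_or_odd n with ⟨k, hk⟩ | ⟨k, hk⟩
  · left
    have h2 : (n : ℤ) • s = (k : ℤ) • (2 * s) := by
      subst hk; push_cast [zsmul_eq_mul]; ring
    rw [h2]
    exact add_mem hy (zsmul_mem hs k)
  · right
    have h2 : y + (n : ℤ) • s - s = y + (k : ℤ) • (2 * s) := by
      subst hk; push_cast [zsmul_eq_mul]; ring
    rw [h2]
    exact add_mem hy (zsmul_mem hs k)

open Classical in
/-- Auxiliary function gluing values on `Γ` and on `s + Γ`. -/
def dAux (F : ↥Γ → ℂ) (G : {μ : ℂ // μ - s ∈ Γ} → ℂ) : ℂ → ℂ :=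
  fun ω => if h : ω ∈ Γ then F ⟨ω, h⟩ else if h' : ω - s ∈ Γ then G ⟨ω, h'⟩ else 0

lemma dAux_mem (F : ↥Γ → ℂ) (G : {μ : ℂ // μ - s ∈ Γ} → ℂ) {ω : ℂ} (h : ω ∈ Γ) :
    dAux Γ s F G ω = F ⟨ω, h⟩ := by simp [dAux, h]

lemma dAux_not (F : ↥Γ → ℂ) (G : {μ : ℂ // μ - s ∈ Γ} → ℂ) {ω : ℂ} (h : ω ∉ Γ)
    (h' : ω - s ∈ Γ) : dAux Γ s F G ω = G ⟨ω, h'⟩ := by simp [dAux, h, h']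

end Aux8
/-- A parity-0 derivation of `SV[Γ,s]` of degree `0` killing `L_{0,0}` acts on the
generators `L_{α,0}`, `G_{μ,0}` by a group homomorphism `d : (Ω,+) → (ℂ,+)`. -/
theorem even_degree_zero_derivation_diagonal (Γ : AddSubgroup ℂ) (hΓ : ∀ n : ℤ, (n : ℂ) ∈ Γ)
    (s : ℂ) (hs : 2 * s ∈ Γ) :
    ∀ D : SV Γ s →ₗ[ℂ] SV Γ s, IsEvenDer Γ s hs D → HasDeg Γ s 0 D →
      D (lgen Γ s 0 (zero_mem Γ) 0) = 0 →
      ∃ d : ↥(Omega Γ s) →+ ℂ,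
        (∀ (α : ℂ) (hα : α ∈ Γ),
          D (lgen Γ s α hα 0) = d ⟨α, gamma_mem_Omega Γ s hα⟩ • lgen Γ s α hα 0) ∧
        (∀ (μ : ℂ) (hμ : μ - s ∈ Γ),
          D (ggen Γ s μ hμ 0) = d ⟨μ, smu_mem_Omega Γ s hμ⟩ • ggen Γ s μ hμ 0) := by
  intro D hD hdeg hD0
  classical
  obtain ⟨hev, hodd, hder⟩ := hD
  set F : ↥Γ → ℂ := fun p => (D (lgen Γ s p p.prop 0)) (Sum.inl (p, 0)) with hF
  set G : {μ : ℂ // μ - s ∈ Γ} → ℂ :=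
    fun q => (D (ggen Γ s q q.prop 0)) (Sum.inr (q, 0)) with hG
  -- Claim A : action on L_{α,0}
  have claimA : ∀ (α : ℂ) (hα : α ∈ Γ),
      D (lgen Γ s α hα 0) = F ⟨α, hα⟩ • lgen Γ s α hα 0 := by
    intro α hα
    have heq := hder (lgen Γ s 0 (zero_mem Γ) 0) (lgen Γ s α hα 0)
      (Or.inl (lgen_even Γ s 0 (zero_mem Γ) 0))
    rw [hD0, bkt_zero_left, zero_add, bkt_L00_L0, map_smul] at heq
    have hdg := hdeg α (lgen Γ s α hα 0) (lgen_indeg Γ s α hα 0)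
    rw [add_zero] at hdg
    exact diag_L Γ s hs hα heq.symm (hev _ (lgen_even Γ s α hα 0)) hdg.1
  -- Claim B : action on L_{α,1}
  have claimB : ∀ (α : ℂ) (hα : α ∈ Γ), ∃ t : ℂ,
      D (lgen Γ s α hα 1) = t • lgen Γ s α hα 0 + F ⟨α, hα⟩ • lgen Γ s α hα 1 := by
    intro α hα
    have heq := hder (lgen Γ s 0 (zero_mem Γ) 0) (lgen Γ s α hα 1)
      (Or.inl (lgen_even Γ s 0 (zero_mem Γ) 0))
    rw [hD0, bkt_zero_left, zero_add, bkt_L00_L1, map_add, map_smul, claimA α hα] at heq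
    have hdg := hdeg α (lgen Γ s α hα 1) (lgen_indeg Γ s α hα 1)
    rw [add_zero] at hdg
    exact ⟨_, diag_L1 Γ s hs hα heq.symm (hev _ (lgen_even Γ s α hα 1)) hdg.1⟩
  -- Claim C : action on G_{μ,0}
  have claimC : ∀ (μ : ℂ) (hμ : μ - s ∈ Γ),
      D (ggen Γ s μ hμ 0) = G ⟨μ, hμ⟩ • ggen Γ s μ hμ 0 := by
    intro μ hμ
    have heq := hder (lgen Γ s 0 (zero_mem Γ) 0) (ggen Γ s μ hμ 0)
      (Or.inl (lgen_even Γ s 0 (zero_mem Γ) 0))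
    rw [hD0, bkt_zero_left, zero_add, bkt_L00_G0, map_smul] at heq
    have hdg := hdeg μ (ggen Γ s μ hμ 0) (ggen_indeg Γ s μ hμ 0)
    rw [add_zero] at hdg
    exact diag_G Γ s hs hμ heq.symm (hodd _ (ggen_odd Γ s μ hμ 0)) hdg.2
  -- Relation on Γ
  have RL : ∀ (α β : ℂ) (hα : α ∈ Γ) (hβ : β ∈ Γ),
      F ⟨α + β, add_mem hα hβ⟩ = F ⟨α, hα⟩ + F ⟨β, hβ⟩ := by
    intro α β hα hβ
    by_cases hab : α = β
    · subst hab
      show F ⟨α + α, add_mem hα hα⟩ = F ⟨α, hα⟩ + F ⟨α, hα⟩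
      obtain ⟨t, hB⟩ := claimB α hα
      have heq := hder (lgen Γ s α hα 0) (lgen Γ s α hα 1)
        (Or.inl (lgen_even Γ s α hα 0))
      rw [bkt_L0_L1, map_add, map_smul, claimA (α + α) (add_mem hα hα),
        claimA α hα, hB, bkt_smul_left, bkt_add_right, bkt_smul_right, bkt_smul_right,
        bkt_L0_L1, bkt_L0_L0] at heq
      have h2 := congrArg (fun w : SV Γ s => w (Sum.inl (⟨α + α, add_mem hα hα⟩, 0))) heq
      simp [lgen, Finsupp.single_apply] at h2
      exact h2
    · have heq := hder (lgen Γ s α hα 0) (lgen Γ s β hβ 0)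
        (Or.inl (lgen_even Γ s α hα 0))
      rw [bkt_L0_L0, map_smul, claimA (α + β) (add_mem hα hβ), claimA α hα, claimA β hβ,
        bkt_smul_left, bkt_smul_right, bkt_L0_L0] at heq
      have h2 := congrArg (fun w : SV Γ s => w (Sum.inl (⟨α + β, add_mem hα hβ⟩, 0))) heq
      simp [lgen, Finsupp.single_apply] at h2
      have h3 : (β - α) * F ⟨α + β, add_mem hα hβ⟩
          = (β - α) * (F ⟨α, hα⟩ + F ⟨β, hβ⟩) := by linear_combination h2
      exact mul_left_cancel₀ (sub_ne_zero.mpr (Ne.symm hab)) h3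
  -- Relation mixing the two sectors
  have RLG : ∀ (α μ : ℂ) (hα : α ∈ Γ) (hμ : μ - s ∈ Γ),
      G ⟨α + μ, memLG Γ s hα hμ⟩ = F ⟨α, hα⟩ + G ⟨μ, hμ⟩ := by
    intro α μ hα hμ
    by_cases hc : μ - α / 2 = 0
    · obtain ⟨t, hB⟩ := claimB α hα
      have heq := hder (lgen Γ s α hα 1) (ggen Γ s μ hμ 0)
        (Or.inl (lgen_even Γ s α hα 1))
      rw [bkt_L1_G0, hc, zero_smul, zero_sub, map_neg, map_smul,
        claimC (α + μ) (memLG Γ s hα hμ), hB, claimC μ hμ, bkt_add_left,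
        bkt_smul_left, bkt_smul_left, bkt_smul_right, bkt_L0_G0, bkt_L1_G0, hc,
        zero_smul, smul_zero, zero_add, zero_smul, zero_sub] at heq
      have h2 := congrArg (fun w : SV Γ s => w (Sum.inr (⟨α + μ, memLG Γ s hα hμ⟩, 0))) heq
      simp [ggen, Finsupp.single_apply] at h2
      linear_combination -2 * h2
    · have heq := hder (lgen Γ s α hα 0) (ggen Γ s μ hμ 0)
        (Or.inl (lgen_even Γ s α hα 0))
      rw [bkt_L0_G0, map_smul, claimC (α + μ) (memLG Γ s hα hμ), claimA α hα,
        claimC μ hμ, bkt_smul_left, bkt_smul_right, bkt_L0_G0] at heq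
      have h2 := congrArg (fun w : SV Γ s => w (Sum.inr (⟨α + μ, memLG Γ s hα hμ⟩, 0))) heq
      simp [ggen, Finsupp.single_apply] at h2
      have h3 : (μ - α / 2) * G ⟨α + μ, memLG Γ s hα hμ⟩
          = (μ - α / 2) * (F ⟨α, hα⟩ + G ⟨μ, hμ⟩) := by linear_combination h2
      exact mul_left_cancel₀ hc h3
  -- Relation on s + Γ
  have RGG : ∀ (μ ν : ℂ) (hμ : μ - s ∈ Γ) (hν : ν - s ∈ Γ),
      F ⟨μ + ν, memGG Γ s hs hμ hν⟩ = G ⟨μ, hμ⟩ + G ⟨ν, hν⟩ := by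
    intro μ ν hμ hν
    have heq := hder (ggen Γ s μ hμ 0) (ggen Γ s ν hν 0)
      (Or.inr (ggen_odd Γ s μ hμ 0))
    rw [bkt_G0_G0, map_smul, claimA (μ + ν) (memGG Γ s hs hμ hν), claimC μ hμ,
      claimC ν hν, bkt_smul_left, bkt_smul_right, bkt_G0_G0] at heq
    have h2 := congrArg (fun w : SV Γ s => w (Sum.inl (⟨μ + ν, memGG Γ s hs hμ hν⟩, 0))) heq
    simp [lgen, Finsupp.single_apply] at h2
    linear_combination h2 / 2
  -- F vanishes at 0
  have F0 : ∀ h : (0 : ℂ) ∈ Γ, F ⟨0, h⟩ = 0 := by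
    intro h
    show (D (lgen Γ s 0 h 0)) (Sum.inl (⟨0, h⟩, 0)) = 0
    have e : lgen Γ s 0 h 0 = lgen Γ s 0 (zero_mem Γ) 0 := rfl
    rw [e, hD0]
    rfl
  -- consistency of F and G on Γ ∩ (s + Γ)
  have consist : ∀ (ω : ℂ) (h1 : ω ∈ Γ) (h2 : ω - s ∈ Γ), F ⟨ω, h1⟩ = G ⟨ω, h2⟩ := by
    intro ω h1 h2
    have e1 := RL ω ω h1 h1
    have e2 := RGG ω ω h2 h2
    have e3 : F ⟨ω + ω, add_mem h1 h1⟩ = F ⟨ω + ω, memGG Γ s hs h2 h2⟩ := rfl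
    rw [e3, e2] at e1
    linear_combination -e1 / 2
  -- assembling the homomorphism
  refine ⟨{ toFun := fun ω => dAux Γ s F G ω,
            map_zero' := ?_, map_add' := ?_ }, ?_, ?_⟩
  · show dAux Γ s F G ((0 : ↥(Omega Γ s)) : ℂ) = 0
    rw [show (((0 : ↥(Omega Γ s))) : ℂ) = 0 from rfl, dAux_mem Γ s F G (zero_mem Γ)]
    exact F0 _
  · intro x y
    show dAux Γ s F G ((x : ℂ) + (y : ℂ)) = dAux Γ s F G x + dAux Γ s F G y
    by_cases hx : (x : ℂ) ∈ Γ <;> by_cases hy : (y : ℂ) ∈ Γ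
    · rw [dAux_mem Γ s F G hx, dAux_mem Γ s F G hy,
        dAux_mem Γ s F G (add_mem hx hy), RL _ _ hx hy]
    · have hy' : (y : ℂ) - s ∈ Γ := (omega_dichotomy Γ s hs y.prop).resolve_left hy
      have hsum : (x : ℂ) + (y : ℂ) ∉ Γ := by
        intro h
        exact hy (by simpa using sub_mem h hx)
      rw [dAux_mem Γ s F G hx, dAux_not Γ s F G hy hy',
        dAux_not Γ s F G hsum (memLG Γ s hx hy'), RLG _ _ hx hy']
    · have hx' : (x : ℂ) - s ∈ Γ := (omega_dichotomy Γ s hs x.prop).resolve_left hx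
      have hsum : (x : ℂ) + (y : ℂ) ∉ Γ := by
        intro h
        exact hx (by simpa using sub_mem h hy)
      have hsum' : (x : ℂ) + (y : ℂ) - s ∈ Γ := by
        have := memLG Γ s hy hx'
        rwa [add_comm (y : ℂ) (x : ℂ)] at this
      rw [dAux_mem Γ s F G hy, dAux_not Γ s F G hx hx',
        dAux_not Γ s F G hsum hsum']
      have e : G ⟨(x : ℂ) + (y : ℂ), hsum'⟩ = G ⟨(y : ℂ) + (x : ℂ), memLG Γ s hy hx'⟩ := by
        congr 1
        exact Subtype.ext (add_comm _ _)
      rw [e, RLG _ _ hy hx']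
      ring
    · have hx' : (x : ℂ) - s ∈ Γ := (omega_dichotomy Γ s hs x.prop).resolve_left hx
      have hy' : (y : ℂ) - s ∈ Γ := (omega_dichotomy Γ s hs y.prop).resolve_left hy
      rw [dAux_not Γ s F G hx hx', dAux_not Γ s F G hy hy',
        dAux_mem Γ s F G (memGG Γ s hs hx' hy'), RGG _ _ hx' hy']
  · intro α hα
    rw [claimA α hα]
    show _ = dAux Γ s F G α • lgen Γ s α hα 0
    rw [dAux_mem Γ s F G hα]
  · intro μ hμ
    rw [claimC μ hμ]
    show _ = dAux Γ s F G μ • ggen Γ s μ hμ 0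
    by_cases hm : μ ∈ Γ
    · rw [dAux_mem Γ s F G hm, ← consist μ hm hμ]
    · rw [dAux_not Γ s F G hm hμ]
end SVSuper
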